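/- Suppose x_p ∈ {0,1} for every leaf l and every p ∈ DP_l, and ρ_{j,a} ∈ {0,1} for every internal node j and every a ∈ S_j, and that constraints (alpha) and (gamma) hold. Then for EVERY feature vector v : F → ℝ (not only the rows of a predetermined dataset), ∑_{leaves l} ∑_{p ∈ DP_l such that v follows p} x_p = 1. Hence the data-dependent cuts generated for unlabeled rows are valid for all binary feasible solutions of the master problem. -/

import Mathlib

/-!
Binarity and (alpha) make `x l` the indicator of a single decision path `P l` for each leaf `l`,
and (gamma) then makes `ρ j` the indicator of the split check that `P l` puts at `j`, for every
leaf `l` below `j`. So the paths `P l` agree on common prefixes and together form one decision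
tree; `v` follows `P l` exactly when `l` is the leaf that `v` reaches by descending this tree,
and exactly one term of the double sum equals `1`.
-/

open Finset

attribute [local instance] Classical.propDecidable

/-- The decision paths for a leaf `l` (a Boolean string of length `k`) of the complete
binary tree of depth `k`: a split check, belonging to the candidate set `S j` of the
corresponding node `j = l.take i`, for every depth `i < k`, together with a target in `T`.
The split check assigned by `p` at the node `l.take i` is `p.1 i`. -/
noncomputable def DP {F T : Type} [Fintype T] (k : ℕ) (S : List Bool → Finset (F × ℝ))
    (l : List Bool) : Finset ((Fin k → F × ℝ) × T) :=
  (Fintype.piFinset fun i : Fin k => S (l.take i.1)) ×ˢ (Finset.univ : Finset T)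

/-- The leaves of the complete binary tree of depth `k`: Boolean strings of length `k`. -/
noncomputable def Leaves (k : ℕ) : Finset (List Bool) :=
  (Finset.univ : Finset (Fin k → Bool)).image List.ofFn

/-- A feature vector `v` follows a decision path `p` for leaf `l`: at every depth `i < k`,
`v` takes the left branch on the split check `p.1 i` (i.e. `v (p.1 i).1 ≤ (p.1 i).2`)
iff the bit of `l` following the node `l.take i` is `false` (i.e. that node is a left
child on the path to `l`). -/
def Follows {F T : Type} (k : ℕ) (v : F → ℝ) (l : List Bool)
    (p : (Fin k → F × ℝ) × T) : Prop :=
  ∀ i : Fin k, (v (p.1 i).1 ≤ (p.1 i).2 ↔ l.getD i.1 false = false)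

theorem exists_eq_ite_of_sum_eq_one {α R : Type*} [AddCommMonoidWithOne R] [CharZero R]
    {s : Finset α} {f : α → R} (hbin : ∀ q ∈ s, f q = 0 ∨ f q = 1)
    (hsum : ∑ q ∈ s, f q = 1) :
    ∃ p ∈ s, ∀ q ∈ s, f q = if q = p then 1 else 0 := by
  have hf : ∀ q ∈ s, f q = if f q = 1 then 1 else 0 := fun q hq => by
    rcases hbin q hq with h | h <;> simp [h]
  rw [sum_congr rfl hf, sum_boole, Nat.cast_eq_one, card_eq_one] at hsum
  obtain ⟨p, hp⟩ := hsum
  have hmem : ∀ q, q ∈ s ∧ f q = 1 ↔ q = p := fun q => by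
    rw [← mem_singleton (a := p), ← hp, mem_filter]
  refine ⟨p, ((hmem p).2 rfl).1, fun q hq => ?_⟩
  rw [hf q hq]
  simp only [← hmem q, hq, true_and]

theorem sum_ite_of_eq_ite {α R : Type*} [AddCommMonoidWithOne R] {s : Finset α} {f : α → R}
    {p : α} (hp : p ∈ s) (hf : ∀ q ∈ s, f q = if q = p then 1 else 0)
    (c : α → Prop) [DecidablePred c] :
    ∑ q ∈ s, (if c q then f q else 0) = if c p then 1 else 0 := by
  rw [sum_eq_single_of_mem p hp fun q hq hqp => by simp [hf q hq, hqp], hf p hp, if_pos rfl]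

theorem eq_of_take_eq_of_eq_ite {β R : Type*} [DecidableEq β] [AddMonoidWithOne R]
    [NeZero (1 : R)] {k : ℕ} {S : List Bool → Finset β} {ρ : List Bool → β → R}
    {σ : List Bool → Fin k → β}
    (hσ : ∀ l, l.length = k → ∀ i : Fin k, σ l i ∈ S (l.take i))
    (hρ : ∀ l, l.length = k → ∀ i : Fin k, ∀ a ∈ S (l.take i),
      ρ (l.take i) a = if σ l i = a then 1 else 0)
    {l l' : List Bool} (hl : l.length = k) (hl' : l'.length = k) {i : Fin k}
    (htake : l.take i = l'.take i) : σ l i = σ l' i := by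
  have h := hρ l' hl' i (σ l i) (htake ▸ hσ l hl i)
  rw [← htake, hρ l hl i _ (hσ l hl i), if_pos rfl] at h
  by_contra hne
  exact one_ne_zero (h.trans (if_neg fun h' => hne h'.symm))

theorem exists_eq_comp_take {α : Type*} [Inhabited α] {k : ℕ} (b : List Bool → Fin k → α)
    (hb : ∀ l l', l.length = k → l'.length = k → ∀ i : Fin k, l.take i = l'.take i →
      b l i = b l' i) :
    ∃ d : List Bool → α, ∀ l, l.length = k → ∀ i : Fin k, b l i = d (l.take i) := by
  refine ⟨fun j => if h : j.length < k then
    b (j ++ List.replicate (k - j.length) false) ⟨j.length, h⟩ else default, fun l hl i => ?_⟩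
  have hlen : (l.take i).length = i := by simp [hl, i.2.le]
  simp only [hlen, i.2, dite_true]
  exact hb _ _ hl (by simp [hlen]) i (List.take_left' hlen).symm

def descend (d : List Bool → Bool) : ℕ → List Bool
  | 0 => []
  | n + 1 => descend d n ++ [d (descend d n)]

theorem length_descend (d : List Bool → Bool) (n : ℕ) : (descend d n).length = n := by
  induction n with
  | zero => rfl
  | succ n ih => simp [descend, ih]

theorem forall_getD_eq_iff_eq_descend (d : List Bool → Bool) (l : List Bool) :
    (∀ i < l.length, l.getD i false = d (l.take i)) ↔ l = descend d l.length := by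
  induction l using List.reverseRecOn with
  | nil => simp [descend]
  | append_singleton l b ih =>
    have hstep : (∀ i < (l ++ [b]).length, (l ++ [b]).getD i false = d ((l ++ [b]).take i)) ↔
        (∀ i < l.length, l.getD i false = d (l.take i)) ∧ b = d l := by
      simp only [List.length_append, List.length_singleton, Nat.lt_succ_iff_lt_or_eq, or_imp,
        forall_and, forall_eq]
      refine and_congr (forall₂_congr fun i hi => ?_) ?_
      · rw [List.take_append_of_le_length hi.le, List.getD_append _ _ _ _ hi]
      · simp
    rw [hstep, ih, List.length_append, List.length_singleton, descend, List.append_singleton_inj]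
    exact and_congr_right fun hl => by rw [← hl]

theorem forall_fin_getD_eq_iff_eq_descend (d : List Bool → Bool) {n : ℕ} {l : List Bool}
    (hl : l.length = n) : (∀ i : Fin n, l.getD i false = d (l.take i)) ↔ l = descend d n := by
  subst hl
  rw [Fin.forall_iff, forall_getD_eq_iff_eq_descend]

theorem mem_DP_iff {F T : Type} [Fintype T] (k : ℕ) (S : List Bool → Finset (F × ℝ))
    (l : List Bool) (p : (Fin k → F × ℝ) × T) :
    p ∈ DP k S l ↔ ∀ i : Fin k, p.1 i ∈ S (l.take i) := by
  simp [DP, Fintype.mem_piFinset]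

theorem mem_Leaves_iff {k : ℕ} {l : List Bool} : l ∈ Leaves k ↔ l.length = k := by
  simp only [Leaves, mem_image, mem_univ, true_and]
  constructor
  · rintro ⟨f, rfl⟩
    simp
  · rintro rfl
    exact ⟨l.get, List.ofFn_get l⟩

theorem follows_iff_getD_eq_decide {F T : Type} {k : ℕ} {v : F → ℝ} {l : List Bool}
    {p : (Fin k → F × ℝ) × T} :
    Follows k v l p ↔ ∀ i : Fin k, l.getD i false = decide ((p.1 i).2 < v (p.1 i).1) := by
  refine forall_congr' fun i => ?_
  cases l.getD i false <;> simp

theorem stmt12_general {F T : Type} [Fintype T]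
    (k : ℕ)
    (S : List Bool → Finset (F × ℝ))
    (x : List Bool → (Fin k → F × ℝ) × T → ℝ)
    (ρ : List Bool → F × ℝ → ℝ)
    -- x and ρ are binary
    (hxbin : ∀ l : List Bool, l.length = k → ∀ p ∈ DP k S l, x l p = 0 ∨ x l p = 1)
    -- constraints (alpha)
    (halpha : ∀ l : List Bool, l.length = k → ∑ p ∈ DP k S l, x l p = 1)
    -- constraints (gamma)
    (hgamma : ∀ l : List Bool, l.length = k → ∀ i : Fin k, ∀ a ∈ S (l.take i.1),
      ∑ p ∈ DP k S l, (if p.1 i = a then x l p else 0) = ρ (l.take i.1) a) :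
    ∀ v : F → ℝ, ∑ l ∈ Leaves k, ∑ p ∈ DP k S l,
      (if Follows k v l p then x l p else 0) = 1 := by
  intro v
  -- `choose!` needs the path type to be inhabited; (alpha) at any leaf provides a path.
  have : Nonempty ((Fin k → F × ℝ) × T) := (nonempty_of_sum_ne_zero
    ((halpha _ (List.length_replicate (n := k) (a := false))).trans_ne one_ne_zero)).to_type
  choose! P hPmem hxP using fun l hl => exists_eq_ite_of_sum_eq_one (hxbin l hl) (halpha l hl)
  have hPS l hl := (mem_DP_iff k S l (P l)).1 (hPmem l hl)
  have hρ l hl i a ha : ρ (l.take i) a = if (P l).1 i = a then 1 else 0 :=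
    (hgamma l hl i a ha).symm.trans (sum_ite_of_eq_ite (hPmem l hl) (hxP l hl) _)
  obtain ⟨d, hd⟩ := exists_eq_comp_take (fun l i => decide (((P l).1 i).2 < v ((P l).1 i).1))
    fun l l' hl hl' i htake => by
      simp only [eq_of_take_eq_of_eq_ite (σ := fun l => (P l).1) hPS hρ hl hl' htake]
  have hleaf : ∀ l ∈ Leaves k, ∑ p ∈ DP k S l, (if Follows k v l p then x l p else 0) =
      if l = descend d k then 1 else 0 := by
    intro l hl
    rw [mem_Leaves_iff] at hl
    rw [sum_ite_of_eq_ite (hPmem l hl) (hxP l hl), follows_iff_getD_eq_decide]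
    simp only [hd l hl, forall_fin_getD_eq_iff_eq_descend d hl]
  rw [sum_congr rfl hleaf, sum_ite_eq', if_pos (mem_Leaves_iff.2 (length_descend d k))]

/-- If `x, ρ` are binary and satisfy constraints (alpha) and (gamma), then for EVERY
feature vector `v : F → ℝ` (not only the rows of a predetermined dataset), the
corresponding constraint (beta) holds: `∑_l ∑_{p ∈ DP_l, v follows p} x_p = 1`.  Hence
the data-dependent cuts generated for unlabeled rows are valid for all binary feasible
solutions of the master problem. -/
theorem stmt12 {F T : Type} [Fintype F] [Nonempty F] [Fintype T] [Nonempty T]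
    (k : ℕ) (hk : 1 ≤ k)
    (S : List Bool → Finset (F × ℝ))
    (hS : ∀ j : List Bool, j.length < k → (S j).Nonempty)
    (x : List Bool → (Fin k → F × ℝ) × T → ℝ)
    (ρ : List Bool → F × ℝ → ℝ)
    -- x and ρ are binary
    (hxbin : ∀ l : List Bool, l.length = k → ∀ p ∈ DP k S l, x l p = 0 ∨ x l p = 1)
    (hρbin : ∀ j : List Bool, j.length < k → ∀ a ∈ S j, ρ j a = 0 ∨ ρ j a = 1)
    -- constraints (alpha)
    (halpha : ∀ l : List Bool, l.length = k → ∑ p ∈ DP k S l, x l p = 1)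
    -- constraints (gamma)
    (hgamma : ∀ l : List Bool, l.length = k → ∀ i : Fin k, ∀ a ∈ S (l.take i.1),
      ∑ p ∈ DP k S l, (if p.1 i = a then x l p else 0) = ρ (l.take i.1) a) :
    ∀ v : F → ℝ, ∑ l ∈ Leaves k, ∑ p ∈ DP k S l,
      (if Follows k v l p then x l p else 0) = 1 :=
  stmt12_general k S x ρ hxbin halpha hgamma
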